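/- For each helicity h ∈ {+1, −1}, the complex polarization vector ê^h(k̂) is an eigenvector of the helicity operator: i · (k̂ × ê^h(k̂)) = h · ê^h(k̂), where the cross product of the (coerced) real vector k̂ with a complex vector is taken componentwise; equivalently, i·ε_{ijl}·k̂_j·ê^h(k̂)_l = h·ê^h(k̂)_i for every i. -/
import Mathlib


open Complex

/-- Dot product on `ℝ³` realized as `Fin 3 → ℝ`. -/
noncomputable def dotR (u v : Fin 3 → ℝ) : ℝ := ∑ i, u i * v i

/-- The complex polarization vectors
`ê^±(k̂)ᵢ = (n̂ᵢ − (n̂·k̂)k̂ᵢ ± i(k̂×n̂)ᵢ)/√(2(1 − (n̂·k̂)²))`,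
with the sign `s = ±1` labelling the helicity. -/
noncomputable def polVec (n k : Fin 3 → ℝ) (s : ℝ) : Fin 3 → ℂ := fun i =>
  (((n i - dotR n k * k i : ℝ) : ℂ) +
      (s : ℂ) * Complex.I * (((crossProduct k n) i : ℝ) : ℂ)) /
    ((Real.sqrt (2 * (1 - (dotR n k) ^ 2)) : ℝ) : ℂ)

/-- For each helicity `h ∈ {+1, −1}`, the polarization vector is an eigenvector of the
helicity operator: `i·(k̂ × ê^h(k̂)) = h·ê^h(k̂)`, the cross product of the coerced real
vector `k̂` with a complex vector taken componentwise. -/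
theorem polVec_helicity_eigen (n k : Fin 3 → ℝ)
    (hk : dotR k k = 1) (hn : dotR n n = 1) (hkn : (dotR n k) ^ 2 ≠ 1)
    (h : ℝ) (hh : h = 1 ∨ h = -1) (i : Fin 3) :
    Complex.I * (crossProduct (fun j => ((k j : ℝ) : ℂ)) (polVec n k h)) i =
      (h : ℂ) * polVec n k h i := by
  have hk' : ((k 0:ℂ))*(k 0) + (k 1)*(k 1) + (k 2)*(k 2) = 1 := by
    exact_mod_cast (by simpa [dotR, Fin.sum_univ_three] using hk)
  have hI : (Complex.I)^2 = -1 := Complex.I_sq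
  set D : ℂ := ((Real.sqrt 2 : ℝ):ℂ) * ((Real.sqrt (1 - (dotR n k)^2) : ℝ):ℂ) with hD
  set d : ℂ := ((dotR n k : ℝ):ℂ) with hd
  have hdot : ((n 0:ℂ))*(k 0) + (n 1)*(k 1) + (n 2)*(k 2) = d := by
    rw [hd]; exact_mod_cast (by simpa [dotR, Fin.sum_univ_three] using rfl)
  fin_cases i <;> rcases hh with rfl | rfl <;>
      simp [polVec, cross_apply, ← hD, ← hd]
  · linear_combination ((d*(k 0) - ((k 0)*(k 0)+(k 1)*(k 1)+(k 2)*(k 2))*(n 0))/D)*hI + (((n 0):ℂ)/D)*hk' + (Complex.I^2*(k 0)/D)*hdot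
  · linear_combination (-(d*(k 0) - ((k 0)*(k 0)+(k 1)*(k 1)+(k 2)*(k 2))*(n 0))/D)*hI + (-((n 0):ℂ)/D)*hk' + (-Complex.I^2*(k 0)/D)*hdot
  · linear_combination ((d*(k 1) - ((k 0)*(k 0)+(k 1)*(k 1)+(k 2)*(k 2))*(n 1))/D)*hI + (((n 1):ℂ)/D)*hk' + (Complex.I^2*(k 1)/D)*hdot
  · linear_combination (-(d*(k 1) - ((k 0)*(k 0)+(k 1)*(k 1)+(k 2)*(k 2))*(n 1))/D)*hI + (-((n 1):ℂ)/D)*hk' + (-Complex.I^2*(k 1)/D)*hdot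
  · linear_combination ((d*(k 2) - ((k 0)*(k 0)+(k 1)*(k 1)+(k 2)*(k 2))*(n 2))/D)*hI + (((n 2):ℂ)/D)*hk' + (Complex.I^2*(k 2)/D)*hdot
  · linear_combination (-(d*(k 2) - ((k 0)*(k 0)+(k 1)*(k 1)+(k 2)*(k 2))*(n 2))/D)*hI + (-((n 2):ℂ)/D)*hk' + (-Complex.I^2*(k 2)/D)*hdot
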